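/- arXiv:quant-ph/0502106 — 4 statements merged into one kernel-verified Lean document; each statement's English description precedes it below -/
import Mathlib

section
/- Let D and K be positive integers and let t_1, …, t_K ∈ M_D(ℂ) be Kraus operators of a unital channel T : M_D(ℂ) → M_D(ℂ), T(X) = Σ_{i=1}^K t_iᴴ X t_i, so that Σ_{i=1}^K t_iᴴ t_i = 1. Then there exists a quantum code of dimension at least ⌊D / 2^{K²}⌋ for T: there exist an orthonormal family of vectors φ_1, …, φ_m in ℂ^D with m = ⌊D / 2^{K²}⌋ and complex numbers ω_{ij} (for 1 ≤ i, j ≤ K) such that the Knill–Laflamme conditions ⟨φ_α, t_iᴴ t_j φ_β⟩ = ω_{ij} · δ_{αβ} hold for all i, j ∈ {1,…,K} and all α, β ∈ {1,…,m}. -/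
/-!
Let `f` be Hermitian and `V` a subspace of dimension `n`. Order an orthonormal eigenbasis of the
compression of `f` to `V` by eigenvalue and pair the `⌊n/2⌋` lowest eigenvectors with the `⌊n/2⌋`
highest ones. A value `c` between the two halves lies between the eigenvalues of every pair, so each
pair spans a unit vector with `⟪w, f w⟫ = c`; these vectors are orthonormal, `f` maps each pair's
span into itself, and so `f` compresses to `c • 1` on their span, of dimension `⌊n/2⌋`.

The `K²` Hermitian operators `tᵢᴴtⱼ + tⱼᴴtᵢ` (`i ≤ j`) and `I • (tᵢᴴtⱼ - tⱼᴴtᵢ)` (`i > j`) span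
every `tᵢᴴtⱼ`. Halving once for each of them leaves a subspace of dimension `⌊D / 2^(K²)⌋` on which
every `tᵢᴴtⱼ` compresses to a scalar, and any orthonormal basis of it is the required code.
-/

open scoped Matrix InnerProductSpace
open Module

namespace Submodule

variable {𝕜 E : Type*} [RCLike 𝕜] [NormedAddCommGroup E] [InnerProductSpace 𝕜 E]

/-- The operators `f` with `P_W f P_W = c • P_W` for some scalar `c`, where `P_W` is the orthogonal
projection onto `W`. -/
def scalarCompressions (W : Submodule 𝕜 E) : Submodule 𝕜 (E →ₗ[𝕜] E) where
  carrier := {f | ∃ c : 𝕜, ∀ x ∈ W, ∀ y ∈ W, ⟪x, f y⟫_𝕜 = c * ⟪x, y⟫_𝕜}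
  zero_mem' := ⟨0, by simp⟩
  add_mem' := by
    rintro f g ⟨c, hc⟩ ⟨d, hd⟩
    exact ⟨c + d, fun x hx y hy => by simp [inner_add_right, hc x hx y hy, hd x hx y hy, add_mul]⟩
  smul_mem' := by
    rintro a f ⟨c, hc⟩
    exact ⟨a * c, fun x hx y hy => by simp [inner_smul_right, hc x hx y hy, mul_assoc]⟩

theorem scalarCompressions_antitone : Antitone (scalarCompressions : Submodule 𝕜 E → _) := by
  rintro V W hVW f ⟨c, hc⟩
  exact ⟨c, fun x hx y hy => hc x (hVW hx) y (hVW hy)⟩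

theorem mem_scalarCompressions_span {ι : Type*} {w : ι → E} {f : E →ₗ[𝕜] E} {c : 𝕜}
    (h : ∀ k l, ⟪w k, f (w l)⟫_𝕜 = c * ⟪w k, w l⟫_𝕜) :
    f ∈ (span 𝕜 (Set.range w)).scalarCompressions := by
  refine ⟨c, fun x hx y hy => ?_⟩
  induction hx, hy using span_induction₂ with
  | mem_mem x y hx hy => obtain ⟨⟨k, rfl⟩, ⟨l, rfl⟩⟩ := And.intro hx hy; exact h k l
  | zero_left | zero_right => simp
  | add_left x y z _ _ _ hx hy => simp only [inner_add_left, hx, hy, mul_add]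
  | add_right x y z _ _ _ hy hz => simp only [map_add, inner_add_right, hy, hz, mul_add]
  | smul_left a x y _ _ hxy => simp only [inner_smul_left, hxy, mul_left_comm]
  | smul_right a x y _ _ hxy => simp only [map_smul, inner_smul_right, hxy, mul_left_comm]

end Submodule

theorem exists_sq_add_sq_eq_one_and_sq_mul_add_sq_mul_eq {a b c : ℝ} (hac : a ≤ c) (hcb : c ≤ b) :
    ∃ s r : ℝ, s ^ 2 + r ^ 2 = 1 ∧ s ^ 2 * a + r ^ 2 * b = c := by
  obtain ⟨t₁, t₂, h₁, h₂, h₁₂, hc⟩ : c ∈ segment ℝ a b := by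
    rw [segment_eq_Icc (hac.trans hcb)]
    exact ⟨hac, hcb⟩
  refine ⟨√t₁, √t₂, ?_, ?_⟩ <;> simpa [Real.sq_sqrt h₁, Real.sq_sqrt h₂]

section Halving

variable {𝕜 E : Type*} [RCLike 𝕜] [NormedAddCommGroup E] [InnerProductSpace 𝕜 E]

theorem Orthonormal.inner_smul_add_smul_map_smul_add_smul {κ : Type*} [DecidableEq κ]
    {g : κ ⊕ κ → E} (hg : Orthonormal 𝕜 g) {f : E →ₗ[𝕜] E} {μ : κ ⊕ κ → ℝ}
    (hf : ∀ p, f (g p) = (μ p : 𝕜) • g p) (s r : κ → ℝ) (k l : κ) :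
    ⟪(s k : 𝕜) • g (.inl k) + (r k : 𝕜) • g (.inr k),
        f ((s l : 𝕜) • g (.inl l) + (r l : 𝕜) • g (.inr l))⟫_𝕜
      = if k = l then ((s k ^ 2 * μ (.inl k) + r k ^ 2 * μ (.inr k) : ℝ) : 𝕜) else 0 := by
  simp only [map_add, map_smul, hf, inner_add_left, inner_add_right, inner_smul_left,
    inner_smul_right, orthonormal_iff_ite.mp hg, Sum.inl.injEq, Sum.inr.injEq, reduceCtorEq,
    if_false, RCLike.conj_ofReal]
  split_ifs with hkl
  · subst hkl
    push_cast
    ring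
  · simp

theorem LinearMap.IsSymmetric.exists_finrank_half_mem_scalarCompressions [FiniteDimensional 𝕜 E]
    {f : E →ₗ[𝕜] E} (hf : f.IsSymmetric) :
    ∃ W : Submodule 𝕜 E, finrank 𝕜 W = finrank 𝕜 E / 2 ∧ f ∈ W.scalarCompressions := by
  classical
  set n := finrank 𝕜 E
  set m := n / 2
  have h2m : 2 * m ≤ n := Nat.mul_div_le n 2
  have hmn : m ≤ n := by omega
  let σ := Tuple.sort (hf.eigenvalues rfl)
  let ν := hf.eigenvalues rfl ∘ σ
  have hν : Monotone ν := Tuple.monotone_sort _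
  let pair : Fin m ⊕ Fin m → Fin n := Sum.elim (Fin.castLE hmn) (Fin.rev ∘ Fin.castLE hmn)
  have hpair : pair.Injective :=
    (Fin.castLE_injective hmn).sumElim (Fin.rev_injective.comp (Fin.castLE_injective hmn))
      fun k l h => by have := congrArg Fin.val h; simp at this; omega
  obtain ⟨c, hc⟩ : ∃ c, ∀ k, ν (pair (.inl k)) ≤ c ∧ c ≤ ν (pair (.inr k)) := by
    rcases Nat.eq_zero_or_pos m with hm | hm
    · exact ⟨0, fun k => absurd k.2 (by omega)⟩
    · exact ⟨ν ⟨m, by omega⟩, fun k => ⟨hν (by simp [pair, Fin.le_def]),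
        hν (by simp [pair, Fin.le_def]; omega)⟩⟩
  choose s r hsr hmix using fun k =>
    exists_sq_add_sq_eq_one_and_sq_mul_add_sq_mul_eq (hc k).1 (hc k).2
  let g := hf.eigenvectorBasis rfl ∘ σ ∘ pair
  have hg : Orthonormal 𝕜 g :=
    (hf.eigenvectorBasis rfl).orthonormal.comp _ (σ.injective.comp hpair)
  have hfg : ∀ p, f (g p) = (ν (pair p) : 𝕜) • g p := fun p => hf.apply_eigenvectorBasis rfl _
  let w k := (s k : 𝕜) • g (.inl k) + (r k : 𝕜) • g (.inr k)
  have hw : Orthonormal 𝕜 w := by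
    rw [orthonormal_iff_ite]
    intro k l
    have := hg.inner_smul_add_smul_map_smul_add_smul (f := LinearMap.id) (μ := 1) (by simp) s r k l
    simpa only [LinearMap.id_apply, Pi.one_apply, mul_one, hsr, RCLike.ofReal_one] using this
  refine ⟨Submodule.span 𝕜 (Set.range w), ?_, Submodule.mem_scalarCompressions_span (c := c) ?_⟩
  · rw [finrank_span_eq_card hw.linearIndependent, Fintype.card_fin]
  · intro k l
    rw [hg.inner_smul_add_smul_map_smul_add_smul hfg, orthonormal_iff_ite.mp hw]
    split_ifs <;> simp [hmix]

theorem LinearMap.IsSymmetric.exists_le_finrank_half_mem_scalarCompressions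
    [FiniteDimensional 𝕜 E] {f : E →ₗ[𝕜] E} (hf : f.IsSymmetric) (V : Submodule 𝕜 E) :
    ∃ W ≤ V, finrank 𝕜 W = finrank 𝕜 V / 2 ∧ f ∈ W.scalarCompressions := by
  let g : V →ₗ[𝕜] V := V.orthogonalProjectionOnto.toLinearMap ∘ₗ f ∘ₗ V.subtype
  have hg : ∀ x y : V, ⟪x, g y⟫_𝕜 = ⟪(x : E), f y⟫_𝕜 := fun x y =>
    Submodule.inner_orthogonalProjectionOnto_eq_of_mem_left x (f y)
  have hg_symm : g.IsSymmetric := fun x y => by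
    rw [← inner_conj_symm, hg, hg, ← hf, inner_conj_symm]
  obtain ⟨W, hW, c, hc⟩ := hg_symm.exists_finrank_half_mem_scalarCompressions
  refine ⟨W.map V.subtype, Submodule.map_subtype_le V W,
    by rw [Submodule.finrank_map_subtype_eq, hW], c, ?_⟩
  rintro _ ⟨x, hx, rfl⟩ _ ⟨y, hy, rfl⟩
  simpa [hg] using hc x hx y hy

theorem exists_le_finrank_div_two_pow_forall_mem_scalarCompressions [FiniteDimensional 𝕜 E]
    {ι : Type*} {f : ι → E →ₗ[𝕜] E} (hf : ∀ i, (f i).IsSymmetric) (s : Finset ι)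
    (V : Submodule 𝕜 E) :
    ∃ W ≤ V, finrank 𝕜 W = finrank 𝕜 V / 2 ^ s.card ∧ ∀ i ∈ s, f i ∈ W.scalarCompressions := by
  induction s using Finset.cons_induction generalizing V with
  | empty => exact ⟨V, le_rfl, by simp, by simp⟩
  | cons i s hi ih =>
    obtain ⟨W₁, hW₁V, hW₁, hfW₁⟩ := (hf i).exists_le_finrank_half_mem_scalarCompressions V
    obtain ⟨W, hWW₁, hW, hfW⟩ := ih W₁
    refine ⟨W, hWW₁.trans hW₁V, ?_, ?_⟩
    · rw [hW, hW₁, Nat.div_div_eq_div_mul, Finset.card_cons, pow_succ']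
    · simp only [Finset.mem_cons, forall_eq_or_imp]
      exact ⟨Submodule.scalarCompressions_antitone hWW₁ hfW₁, hfW⟩

end Halving

section HermitianParts

variable {E : Type*} [NormedAddCommGroup E] [InnerProductSpace ℂ E] {κ : Type*} [LinearOrder κ]

/-- When `A j i = (A i j)†`, these are `2 Re (A i j)` for `i ≤ j` and `2 Im (A j i)` for `i > j`:
`card κ ^ 2` Hermitian operators whose span contains every `A i j`. -/
def hermitianParts (A : κ → κ → E →ₗ[ℂ] E) (p : κ × κ) : E →ₗ[ℂ] E :=
  if p.1 ≤ p.2 then A p.1 p.2 + A p.2 p.1 else Complex.I • (A p.1 p.2 - A p.2 p.1)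

theorem isSymmetric_hermitianParts {A : κ → κ → E →ₗ[ℂ] E}
    (hA : ∀ i j x y, ⟪A i j x, y⟫_ℂ = ⟪x, A j i y⟫_ℂ) (p : κ × κ) :
    (hermitianParts A p).IsSymmetric := by
  intro x y
  unfold hermitianParts
  split_ifs
  · simp only [LinearMap.add_apply, inner_add_left, inner_add_right, hA, add_comm]
  · simp only [LinearMap.smul_apply, LinearMap.sub_apply, inner_smul_left, inner_smul_right,
      inner_sub_left, inner_sub_right, hA, Complex.conj_I]
    ring

theorem mem_span_hermitianParts (A : κ → κ → E →ₗ[ℂ] E) (i j : κ) :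
    A i j ∈ Submodule.span ℂ {hermitianParts A (i, j), hermitianParts A (j, i)} := by
  rw [Submodule.mem_span_pair]
  simp only [hermitianParts]
  rcases lt_trichotomy i j with hij | rfl | hij
  · refine ⟨1 / 2, Complex.I / 2, ?_⟩
    rw [if_pos hij.le, if_neg hij.not_ge, smul_smul]
    linear_combination (norm := module) Complex.I_sq • ((1 / 2 : ℂ) • (A j i - A i j))
  · exact ⟨1 / 2, 0, by simp; module⟩
  · refine ⟨-Complex.I / 2, 1 / 2, ?_⟩
    rw [if_pos hij.le, if_neg hij.not_ge, smul_smul]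
    linear_combination (norm := module) Complex.I_sq • ((1 / 2 : ℂ) • (A j i - A i j))

theorem exists_orthonormal_inner_map_eq_ite_of_adjoint [FiniteDimensional ℂ E] [Fintype κ]
    {A : κ → κ → E →ₗ[ℂ] E} (hA : ∀ i j x y, ⟪A i j x, y⟫_ℂ = ⟪x, A j i y⟫_ℂ) :
    ∃ φ : Fin (finrank ℂ E / 2 ^ Fintype.card κ ^ 2) → E, Orthonormal ℂ φ ∧
      ∃ ω : κ → κ → ℂ, ∀ i j α β, ⟪φ α, A i j (φ β)⟫_ℂ = ω i j * if α = β then 1 else 0 := by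
  obtain ⟨W, -, hW, hWA⟩ := exists_le_finrank_div_two_pow_forall_mem_scalarCompressions
    (isSymmetric_hermitianParts hA) Finset.univ ⊤
  rw [Finset.card_univ, Fintype.card_prod, finrank_top, ← sq] at hW
  have hAW : ∀ i j, A i j ∈ W.scalarCompressions := fun i j =>
    Submodule.span_le.mpr (by simp [Set.insert_subset_iff, hWA]) (mem_span_hermitianParts A i j)
  choose ω hω using hAW
  let b := (stdOrthonormalBasis ℂ W).reindex (finCongr hW)
  have hφ : Orthonormal ℂ (fun α => (b α : E)) := b.orthonormal.comp_linearIsometry W.subtypeₗᵢ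
  refine ⟨_, hφ, ω, fun i j α β => ?_⟩
  rw [hω i j _ (b α).2 _ (b β).2, orthonormal_iff_ite.mp hφ]

end HermitianParts

theorem knill_laflamme_code_of_kraus_general
    (D K : ℕ)
    (t : Fin K → Matrix (Fin D) (Fin D) ℂ) :
    ∃ φ : Fin (D / 2 ^ K ^ 2) → EuclideanSpace ℂ (Fin D),
      Orthonormal ℂ φ ∧
        ∃ ω : Fin K → Fin K → ℂ,
          ∀ (i j : Fin K) (α β : Fin (D / 2 ^ K ^ 2)),
            ⟪φ α, Matrix.toEuclideanLin ((t i)ᴴ * t j) (φ β)⟫_ℂ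
              = ω i j * (if α = β then 1 else 0) := by
  have hA : ∀ i j x y, ⟪Matrix.toEuclideanLin ((t i)ᴴ * t j) x, y⟫_ℂ
      = ⟪x, Matrix.toEuclideanLin ((t j)ᴴ * t i) y⟫_ℂ := fun i j x y => by
    rw [show (t j)ᴴ * t i = ((t i)ᴴ * t j)ᴴ by simp [Matrix.conjTranspose_mul],
      Matrix.toEuclideanLin_conjTranspose_eq_adjoint, LinearMap.adjoint_inner_right]
  have := exists_orthonormal_inner_map_eq_ite_of_adjoint hA
  rwa [finrank_euclideanSpace_fin, Fintype.card_fin] at this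

/-- For a unital channel on `M_D(ℂ)` with `K` Kraus operators `t i`
(`Σ_i (t i)ᴴ (t i) = 1`) there is a quantum code of dimension
`⌊D / 2^(K²)⌋`: an orthonormal family `φ` of that size in `ℂ^D` together with
coefficients `ω i j` satisfying the Knill–Laflamme conditions
`⟪φ α, (t i)ᴴ (t j) φ β⟫ = ω i j · δ_{αβ}`. -/
theorem knill_laflamme_code_of_kraus
    (D K : ℕ) (hD : 0 < D) (hK : 0 < K)
    (t : Fin K → Matrix (Fin D) (Fin D) ℂ)
    (ht : ∑ i, (t i)ᴴ * t i = 1) :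
    ∃ φ : Fin (D / 2 ^ K ^ 2) → EuclideanSpace ℂ (Fin D),
      Orthonormal ℂ φ ∧
        ∃ ω : Fin K → Fin K → ℂ,
          ∀ (i j : Fin K) (α β : Fin (D / 2 ^ K ^ 2)),
            ⟪φ α, Matrix.toEuclideanLin ((t i)ᴴ * t j) (φ β)⟫_ℂ
              = ω i j * (if α = β then 1 else 0) :=
  knill_laflamme_code_of_kraus_general D K t
end

section
/- Let D be a positive integer and let τ ∈ M_D(ℂ) be Hermitian (τᴴ = τ). Then there exist a real number ω and an orthonormal family of vectors φ_1, …, φ_m in ℂ^D with m = ⌊D/2⌋ such that ⟨φ_α, τ φ_β⟩ = ω · δ_{αβ} for all α, β ∈ {1,…,m}. (Each φ_α can be constructed as a suitably weighted combination of one eigenvector of τ with eigenvalue above ω and one with eigenvalue below ω.) -/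
/-!
Diagonalise `τ` and list its eigenvalues `λ₀ ≥ λ₁ ≥ ⋯ ≥ λ_{D-1}`; take `ω = λ_m` with
`m = ⌊D/2⌋`. For `α < m`, pair the eigenvector of `λ_α ≥ ω` with that of `λ_{D-1-α} ≤ ω`
(these `2m` indices are distinct). Writing `ω = s λ_α + t λ_{D-1-α}` as a convex combination,
`φ_α = √s v_α + √t v_{D-1-α}` is a unit vector with `⟪φ_α, τ φ_α⟫ = ω`, and different `φ_α`
involve disjoint sets of eigenvectors, so all off-diagonal terms vanish.
-/

open scoped Matrix InnerProductSpace ComplexConjugate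
open Function

variable {𝕜 E ι κ : Type*} [RCLike 𝕜] [NormedAddCommGroup E] [InnerProductSpace 𝕜 E]

theorem Orthonormal.inner_pair_combination [DecidableEq κ] {v : ι → E} (hv : Orthonormal 𝕜 v)
    {p q : κ → ι} (hp : Injective p) (hq : Injective q) (hpq : ∀ k l, p k ≠ q l) (a b a' b' : κ → 𝕜)
    (k l : κ) :
    ⟪a k • v (p k) + b k • v (q k), a' l • v (p l) + b' l • v (q l)⟫_𝕜 =
      if k = l then conj (a k) * a' k + conj (b k) * b' k else 0 := by
  classical
  have hv' := orthonormal_iff_ite.mp hv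
  rcases eq_or_ne k l with rfl | hkl
  · simp [inner_add_left, inner_add_right, inner_smul_left, inner_smul_right, hv', hv.1, hpq,
      (hpq _ _).symm]
    ring
  · simp [inner_add_left, inner_add_right, inner_smul_left, inner_smul_right, hv', hpq,
      (hpq _ _).symm, hp.ne hkl, hq.ne hkl, hkl]

theorem exists_sq_add_sq_eq_one_of_mem_uIcc {a b ω : ℝ} (h : ω ∈ Set.uIcc a b) :
    ∃ c d : ℝ, c ^ 2 + d ^ 2 = 1 ∧ c ^ 2 * a + d ^ 2 * b = ω := by
  rw [← segment_eq_uIcc] at h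
  obtain ⟨s, t, hs, ht, hst, rfl⟩ := h
  exact ⟨√s, √t, by rw [Real.sq_sqrt hs, Real.sq_sqrt ht, hst],
    by rw [Real.sq_sqrt hs, Real.sq_sqrt ht, smul_eq_mul, smul_eq_mul]⟩

theorem exists_orthonormal_inner_apply_eq_of_eigenvectors [DecidableEq κ] (T : E →ₗ[𝕜] E)
    {v : ι → E} {μ : ι → ℝ} (hv : Orthonormal 𝕜 v) (hTv : ∀ i, T (v i) = (μ i : 𝕜) • v i)
    {p q : κ → ι} (hp : Injective p) (hq : Injective q) (hpq : ∀ k l, p k ≠ q l) {ω : ℝ}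
    (hω : ∀ k, ω ∈ Set.uIcc (μ (p k)) (μ (q k))) :
    ∃ φ : κ → E, Orthonormal 𝕜 φ ∧
      ∀ k l, ⟪φ k, T (φ l)⟫_𝕜 = if k = l then (ω : 𝕜) else 0 := by
  choose c d hcd hcdω using fun k => exists_sq_add_sq_eq_one_of_mem_uIcc (hω k)
  have hTφ : ∀ l, T ((c l : 𝕜) • v (p l) + (d l : 𝕜) • v (q l)) =
      ((c l * μ (p l) : ℝ) : 𝕜) • v (p l) + ((d l * μ (q l) : ℝ) : 𝕜) • v (q l) := by
    intro l
    simp only [map_add, map_smul, hTv, smul_smul, RCLike.ofReal_mul]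
  refine ⟨fun k => (c k : 𝕜) • v (p k) + (d k : 𝕜) • v (q k), ?_, fun k l => ?_⟩
  · refine orthonormal_iff_ite.mpr fun k l => ?_
    rw [hv.inner_pair_combination hp hq hpq (fun k => (c k : 𝕜)) (fun k => (d k : 𝕜))
      (fun k => (c k : 𝕜)) (fun k => (d k : 𝕜)) k l]
    split_ifs
    · simp only [RCLike.conj_ofReal]
      exact_mod_cast by linear_combination hcd k
    · rfl
  · rw [hTφ, hv.inner_pair_combination hp hq hpq (fun k => (c k : 𝕜)) (fun k => (d k : 𝕜))
      (fun l => ((c l * μ (p l) : ℝ) : 𝕜)) (fun l => ((d l * μ (q l) : ℝ) : 𝕜)) k l]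
    split_ifs
    · simp only [RCLike.conj_ofReal]
      exact_mod_cast by linear_combination hcdω k
    · rfl

theorem Fin.castLE_ne_rev_castLE {m n : ℕ} (h : m + m ≤ n) (k l : Fin m) :
    (Fin.castLE (by omega) k : Fin n) ≠ Fin.rev (Fin.castLE (by omega) l) := by
  rw [Ne, Fin.ext_iff, Fin.val_rev, Fin.val_castLE, Fin.val_castLE]
  omega

theorem LinearMap.IsSymmetric.exists_orthonormal_inner_apply_eq [FiniteDimensional 𝕜 E]
    {T : E →ₗ[𝕜] E} (hT : T.IsSymmetric) {n : ℕ} (hn : Module.finrank 𝕜 E = n) (hn0 : 0 < n) :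
    ∃ (ω : ℝ) (φ : Fin (n / 2) → E), Orthonormal 𝕜 φ ∧
      ∀ k l, ⟪φ k, T (φ l)⟫_𝕜 = if k = l then (ω : 𝕜) else 0 := by
  have hm : n / 2 + n / 2 ≤ n := by omega
  let p : Fin (n / 2) → Fin n := Fin.castLE (by omega)
  refine ⟨_, exists_orthonormal_inner_apply_eq_of_eigenvectors T
    (hT.eigenvectorBasis hn).orthonormal (hT.apply_eigenvectorBasis hn) (p := p) (q := Fin.rev ∘ p)
    (Fin.castLE_injective _) (Fin.rev_injective.comp (Fin.castLE_injective _))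
    (Fin.castLE_ne_rev_castLE hm)
    (ω := hT.eigenvalues hn ⟨n / 2, by omega⟩) fun k => Set.mem_uIcc_of_ge ?_ ?_⟩
  all_goals
    apply hT.eigenvalues_antitone hn
    rw [Fin.le_iff_val_le_val]
    simp only [p, Function.comp_def, Fin.val_rev, Fin.val_castLE]
    omega

/-- For any Hermitian matrix `τ ∈ M_D(ℂ)` there are a real number `ω` and an
orthonormal family `φ_1, …, φ_m` in `ℂ^D` with `m = ⌊D/2⌋` such that
`⟪φ α, τ φ β⟫ = ω · δ_{αβ}` for all `α, β`. -/
theorem hermitian_balanced_pairing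
    (D : ℕ) (hD : 0 < D)
    (τ : Matrix (Fin D) (Fin D) ℂ) (hτ : τ.IsHermitian) :
    ∃ (ω : ℝ) (φ : Fin (D / 2) → EuclideanSpace ℂ (Fin D)),
      Orthonormal ℂ φ ∧
        ∀ (α β : Fin (D / 2)),
          ⟪φ α, Matrix.toEuclideanLin τ (φ β)⟫_ℂ
            = (ω : ℂ) * (if α = β then 1 else 0) := by
  obtain ⟨ω, φ, hφ, hτφ⟩ := (Matrix.isSymmetric_toEuclideanLin_iff.mpr hτ
    ).exists_orthonormal_inner_apply_eq finrank_euclideanSpace_fin hD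
  exact ⟨ω, φ, hφ, fun α β => by rw [hτφ, mul_ite, mul_one, mul_zero]; rfl⟩
end

section
/- Let B be a unital C*-algebra, let H, K, K₁ be complex Hilbert spaces, let π : B → B(K) and π₁ : B → B(K₁) be unital *-homomorphisms, and let V : H → K and V₁ : H → K₁ be isometric linear maps such that Vᴴ π(b) V = V₁ᴴ π₁(b) V₁ for all b ∈ B. Assume minimality of (K, π, V): the closed linear span of { π(b) V ψ : b ∈ B, ψ ∈ H } equals K. Then there exists an isometric linear map W : K → K₁ satisfying the intertwining relation W π(b) = π₁(b) W for all b ∈ B, and W V = V₁. (Uniqueness of the minimal Stinespring dilation up to an isometric intertwiner.) -/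
/-!
The families `π(b) V ψ` and `π₁(b) V₁ ψ` have the same Gram matrix `⟪ψ, Vᴴ π(b⋆c) V χ⟫`, so
`π(b) V ψ ↦ π₁(b) V₁ ψ` extends linearly to an isometry on the span of the first family, and by
minimality and continuity to all of `K`. Intertwining and `W V = V₁` (take `b = 1`) then only
need checking on generators.
-/

open ContinuousLinearMap Finsupp
open scoped InnerProductSpace

section GramMatrix

variable {𝕜 ι E F : Type*} [RCLike 𝕜]
  [NormedAddCommGroup E] [InnerProductSpace 𝕜 E] [NormedAddCommGroup F] [InnerProductSpace 𝕜 F]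
  {g : ι → E} {g₁ : ι → F}

theorem inner_linearCombination_eq_of_inner_eq (h : ∀ i j, ⟪g₁ i, g₁ j⟫_𝕜 = ⟪g i, g j⟫_𝕜)
    (l l' : ι →₀ 𝕜) :
    ⟪linearCombination 𝕜 g₁ l, linearCombination 𝕜 g₁ l'⟫_𝕜 =
      ⟪linearCombination 𝕜 g l, linearCombination 𝕜 g l'⟫_𝕜 := by
  simp only [linearCombination_apply, Finsupp.sum_inner, Finsupp.inner_sum, inner_smul_left,
    inner_smul_right, h]

theorem norm_linearCombination_eq_of_inner_eq (h : ∀ i j, ⟪g₁ i, g₁ j⟫_𝕜 = ⟪g i, g j⟫_𝕜)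
    (l : ι →₀ 𝕜) : ‖linearCombination 𝕜 g₁ l‖ = ‖linearCombination 𝕜 g l‖ := by
  rw [norm_eq_sqrt_re_inner (𝕜 := 𝕜), norm_eq_sqrt_re_inner (𝕜 := 𝕜),
    inner_linearCombination_eq_of_inner_eq h]

theorem exists_isometry_map_eq_of_inner_eq [CompleteSpace F]
    (hdense : (Submodule.span 𝕜 (Set.range g)).topologicalClosure = ⊤)
    (h : ∀ i j, ⟪g₁ i, g₁ j⟫_𝕜 = ⟪g i, g j⟫_𝕜) :
    ∃ W : E →L[𝕜] F, (∀ x, ‖W x‖ = ‖x‖) ∧ ∀ i, W (g i) = g₁ i := by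
  have hrange : DenseRange (linearCombination 𝕜 g) := by
    rw [DenseRange, ← LinearMap.coe_range, range_linearCombination]
    exact Submodule.dense_iff_topologicalClosure_eq_top.mpr hdense
  have hnorm : ∃ C, ∀ l, ‖linearCombination 𝕜 g₁ l‖ ≤ C * ‖linearCombination 𝕜 g l‖ :=
    ⟨1, fun l => by rw [one_mul, norm_linearCombination_eq_of_inner_eq h]⟩
  set W := (linearCombination 𝕜 g₁).extendOfNorm (linearCombination 𝕜 g)
  have hW : ∀ l, W (linearCombination 𝕜 g l) = linearCombination 𝕜 g₁ l :=
    LinearMap.extendOfNorm_eq hrange hnorm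
  refine ⟨W, fun x => ?_, fun i => by simpa using hW (single i 1)⟩
  refine congrFun (hrange.equalizer (g := fun x => ‖W x‖) (by fun_prop) continuous_norm ?_) x
  ext l
  simp only [Function.comp_apply, hW, norm_linearCombination_eq_of_inner_eq h]

end GramMatrix

theorem inner_map_apply_map_apply_eq_inner_adjoint {𝕜 A H K : Type*} [RCLike 𝕜] [Semiring A]
    [Star A] [Algebra 𝕜 A]
    [NormedAddCommGroup H] [InnerProductSpace 𝕜 H] [CompleteSpace H]
    [NormedAddCommGroup K] [InnerProductSpace 𝕜 K] [CompleteSpace K]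
    (ρ : A →⋆ₐ[𝕜] (K →L[𝕜] K)) (U : H →L[𝕜] K) (b c : A) (ψ χ : H) :
    ⟪ρ b (U ψ), ρ c (U χ)⟫_𝕜 = ⟪ψ, ((adjoint U).comp ((ρ (star b * c)).comp U)) χ⟫_𝕜 := by
  rw [← adjoint_inner_right (ρ b), ← star_eq_adjoint, ← map_star, ← adjoint_inner_right U,
    map_mul]
  rfl

theorem minimal_stinespring_unique_general
    {B : Type*} [NormedRing B] [StarRing B]
    [NormedAlgebra ℂ B]
    {H K K₁ : Type*}
    [NormedAddCommGroup H] [InnerProductSpace ℂ H] [CompleteSpace H]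
    [NormedAddCommGroup K] [InnerProductSpace ℂ K] [CompleteSpace K]
    [NormedAddCommGroup K₁] [InnerProductSpace ℂ K₁] [CompleteSpace K₁]
    (π : B →⋆ₐ[ℂ] (K →L[ℂ] K)) (π₁ : B →⋆ₐ[ℂ] (K₁ →L[ℂ] K₁))
    (V : H →L[ℂ] K) (V₁ : H →L[ℂ] K₁)
    (heq : ∀ b : B,
      (adjoint V).comp ((π b).comp V) = (adjoint V₁).comp ((π₁ b).comp V₁))
    (hmin : (Submodule.span ℂ
        {x : K | ∃ (b : B) (ψ : H), x = π b (V ψ)}).topologicalClosure = ⊤) :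
    ∃ W : K →L[ℂ] K₁,
      (∀ x, ‖W x‖ = ‖x‖) ∧
      (∀ b : B, W.comp (π b) = (π₁ b).comp W) ∧
      W.comp V = V₁ := by
  have hgenerators : {x : K | ∃ (b : B) (ψ : H), x = π b (V ψ)} =
      Set.range fun p : B × H => π p.1 (V p.2) := by
    ext x
    simp [eq_comm]
  obtain ⟨W, hW, hWgen⟩ := exists_isometry_map_eq_of_inner_eq (hgenerators ▸ hmin)
    (g₁ := fun p : B × H => π₁ p.1 (V₁ p.2)) fun p q => by
      simp only [inner_map_apply_map_apply_eq_inner_adjoint, heq]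
  refine ⟨W, hW, fun b => ?_, ?_⟩
  · refine ext_on (Submodule.dense_iff_topologicalClosure_eq_top.mpr hmin) ?_
    rintro _ ⟨c, ψ, rfl⟩
    have hmul := hWgen (b * c, ψ)
    rw [map_mul, map_mul] at hmul
    rw [comp_apply, comp_apply, hWgen (c, ψ)]
    exact hmul
  · ext ψ
    simpa using hWgen (1, ψ)

/-- Uniqueness of the minimal Stinespring dilation up to an isometric
intertwiner: if `(K, π, V)` and `(K₁, π₁, V₁)` are Stinespring representations
of the same completely positive map (`Vᴴ π(b) V = V₁ᴴ π₁(b) V₁` for all `b`)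
with `V, V₁` isometric and `(K, π, V)` minimal (the closed linear span of
`π(B) V H` is all of `K`), then there is an isometric linear map `W : K → K₁`
with `W π(b) = π₁(b) W` for all `b` and `W V = V₁`. -/
theorem minimal_stinespring_unique
    {B : Type*} [NormedRing B] [StarRing B] [CStarRing B]
    [NormedAlgebra ℂ B] [StarModule ℂ B] [CompleteSpace B]
    {H K K₁ : Type*}
    [NormedAddCommGroup H] [InnerProductSpace ℂ H] [CompleteSpace H]
    [NormedAddCommGroup K] [InnerProductSpace ℂ K] [CompleteSpace K]
    [NormedAddCommGroup K₁] [InnerProductSpace ℂ K₁] [CompleteSpace K₁]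
    (π : B →⋆ₐ[ℂ] (K →L[ℂ] K)) (π₁ : B →⋆ₐ[ℂ] (K₁ →L[ℂ] K₁))
    (V : H →L[ℂ] K) (V₁ : H →L[ℂ] K₁)
    (hV : ∀ x, ‖V x‖ = ‖x‖) (hV₁ : ∀ x, ‖V₁ x‖ = ‖x‖)
    (heq : ∀ b : B,
      (adjoint V).comp ((π b).comp V) = (adjoint V₁).comp ((π₁ b).comp V₁))
    (hmin : (Submodule.span ℂ
        {x : K | ∃ (b : B) (ψ : H), x = π b (V ψ)}).topologicalClosure = ⊤) :
    ∃ W : K →L[ℂ] K₁,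
      (∀ x, ‖W x‖ = ‖x‖) ∧
      (∀ b : B, W.comp (π b) = (π₁ b).comp W) ∧
      W.comp V = V₁ :=
  minimal_stinespring_unique_general π π₁ V V₁ heq hmin
end

section
/- Let d_A, d_B, d_M be positive integers and let V be a complex matrix with rows indexed by Fin d_B × Fin d_M and columns indexed by Fin d_M × Fin d_A such that VᴴV = 1 (V is an isometry from ℂ^{d_M} ⊗ ℂ^{d_A} to ℂ^{d_B} ⊗ ℂ^{d_M}). Let μ be a d_M × d_M positive semidefinite complex matrix with trace 1 (a memory state). Then there exist d_M² matrices s_{αβ} (α, β ∈ Fin d_M) with d_B rows and d_A columns such that (i) for every d_A × d_A matrix ρ and every d_B × d_B matrix b, tr( (μ ⊗ ρ) · Vᴴ · (b ⊗ 1_{d_M}) · V ) = Σ_{α,β} tr( ρ · s_{αβ}ᴴ · b · s_{αβ} ), and (ii) there exist an orthonormal family φ_1, …, φ_m in ℂ^{d_A} with m = ⌊d_A / 2^{d_M⁴}⌋ and complex numbers ω_{(α,β),(α',β')} such that the Knill–Laflamme conditions ⟨φ_γ, s_{αβ}ᴴ s_{α'β'} φ_δ⟩ = ω_{(α,β),(α',β')}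 · δ_{γδ} hold for all α, β, α', β' ∈ Fin d_M and all γ, δ ∈ {1,…,m}. (Thus, independently of the memory state μ, the restricted pure memory channel admits a perfectly correctable quantum code of dimension at least ⌊d_A / 2^{d_M⁴}⌋.) -/
/-!
Write `μ = Cᴴ C`. With `Vα` the slice of `V` at output memory index `α` and `cβ = (C β)ᴴ ⊗ 1`,
the operators `s α β = Vα cβ` are Kraus operators of the restricted channel, because
`μ ⊗ ρ = ∑ β cβ ρ cβᴴ` and `Vᴴ (b ⊗ 1) V = ∑ α Vαᴴ b Vα`.

For the code, the `d_M⁴` operators `s αβᴴ s α'β'` are linear combinations of `d_M⁴` self-adjoint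
ones, since `(s αβᴴ s α'β')ᴴ = s α'β'ᴴ s αβ`. A self-adjoint operator on an `n`-dimensional space
is scalar on some `⌊n/2⌋`-dimensional subspace: pair the `k`-th largest eigenvector with the `k`-th
smallest one and mix each pair so that its expectation is the median eigenvalue. Doing this for
each self-adjoint operator in turn, inside the subspace obtained so far, costs a factor `2` each
time.
-/

open scoped Kronecker Matrix ComplexOrder InnerProductSpace

open Module

section ScalarOn
variable {𝕜 E : Type*} [RCLike 𝕜] [NormedAddCommGroup E] [InnerProductSpace 𝕜 E]

def scalarOn (K : Submodule 𝕜 E) : Submodule 𝕜 (E →ₗ[𝕜] E) where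
  carrier := {A | ∃ c : 𝕜, ∀ x ∈ K, ∀ y ∈ K, ⟪x, A y⟫_𝕜 = c * ⟪x, y⟫_𝕜}
  zero_mem' := ⟨0, by simp⟩
  add_mem' := by
    rintro A A' ⟨c, hc⟩ ⟨c', hc'⟩
    exact ⟨c + c', fun x hx y hy => by simp [inner_add_right, hc x hx y hy, hc' x hx y hy, add_mul]⟩
  smul_mem' := by
    rintro a A ⟨c, hc⟩
    exact ⟨a * c, fun x hx y hy => by simp [inner_smul_right, hc x hx y hy, mul_assoc]⟩

theorem scalarOn_antitone : Antitone (scalarOn (𝕜 := 𝕜) (E := E)) := by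
  rintro K K' hK A ⟨c, hc⟩
  exact ⟨c, fun x hx y hy => hc x (hK hx) y (hK hy)⟩

theorem mem_scalarOn_span {ι : Type*} {A : E →ₗ[𝕜] E} {ψ : ι → E} {c : 𝕜}
    (h : ∀ k l, ⟪ψ k, A (ψ l)⟫_𝕜 = c * ⟪ψ k, ψ l⟫_𝕜) :
    A ∈ scalarOn (Submodule.span 𝕜 (Set.range ψ)) := by
  let D : E →ₗ⋆[𝕜] E →ₗ[𝕜] 𝕜 := (innerₛₗ 𝕜).compl₂ A - c • innerₛₗ 𝕜
  have hD : ∀ x ∈ Set.range ψ, ∀ y ∈ Submodule.span 𝕜 (Set.range ψ), D x y = 0 := by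
    rintro _ ⟨k, rfl⟩ y hy
    refine LinearMap.eqOn_span' (f := D (ψ k)) (g := 0) ?_ hy
    rintro _ ⟨l, rfl⟩
    simp [D, h]
  refine ⟨c, fun x hx y hy => sub_eq_zero.mp ?_⟩
  have := LinearMap.eqOn_span' (f := D.flip y) (g := 0) (fun x hx => hD x hx y hy) hx
  simpa [D] using this

theorem exists_orthonormal_inner_apply_eq_of_pairs {ι : Type*} {T : E →ₗ[𝕜] E} {u v : ι → E}
    (huv : Orthonormal 𝕜 (Sum.elim u v)) {a b : ι → ℝ} (hu : ∀ k, T (u k) = (a k : 𝕜) • u k)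
    (hv : ∀ k, T (v k) = (b k : 𝕜) • v k) {c : ℝ} (hbc : ∀ k, b k ≤ c) (hca : ∀ k, c ≤ a k) :
    ∃ ψ : ι → E, Orthonormal 𝕜 ψ ∧ ∀ k l, ⟪ψ k, T (ψ l)⟫_𝕜 = c * ⟪ψ k, ψ l⟫_𝕜 := by
  classical
  have hseg : ∀ k, c ∈ segment ℝ (b k) (a k) := fun k => by
    rw [segment_eq_Icc ((hbc k).trans (hca k))]
    exact ⟨hbc k, hca k⟩
  choose p q hp hq hpq hc using hseg
  have hinner : ∀ k l (x y : 𝕜), ⟪(√(p k) : 𝕜) • v k + (√(q k) : 𝕜) • u k, x • v l + y • u l⟫_𝕜 =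
      if k = l then √(p k) * x + √(q k) * y else 0 := by
    intro k l x y
    have h := orthonormal_iff_ite.mp huv
    have huu := h (.inl k) (.inl l)
    have hvv := h (.inr k) (.inr l)
    have huv' := h (.inl k) (.inr l)
    have hvu := h (.inr k) (.inl l)
    simp only [Sum.elim_inl, Sum.elim_inr, Sum.inl.injEq, Sum.inr.injEq, reduceCtorEq,
      if_false] at huu hvv huv' hvu
    simp only [inner_add_left, inner_add_right, inner_smul_left, inner_smul_right, huu, hvv, huv',
      hvu, RCLike.conj_ofReal]
    split_ifs <;> ring
  have hsqrt : ∀ k, (√(p k) : 𝕜) * √(p k) = p k ∧ (√(q k) : 𝕜) * √(q k) = q k := fun k =>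
    ⟨by exact_mod_cast Real.mul_self_sqrt (hp k), by exact_mod_cast Real.mul_self_sqrt (hq k)⟩
  refine ⟨fun k => (√(p k) : 𝕜) • v k + (√(q k) : 𝕜) • u k, orthonormal_iff_ite.mpr ?_, ?_⟩
  · intro k l
    rw [hinner]
    split_ifs with hkl
    · subst hkl
      rw [(hsqrt k).1, (hsqrt k).2]
      exact_mod_cast hpq k
    · rfl
  · intro k l
    simp only [map_add, map_smul, hu, hv, smul_smul, hinner]
    split_ifs with hkl
    · subst hkl
      have hc' : (p k * b k + q k * a k : 𝕜) = c := by exact_mod_cast hc k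
      have hpq' : (p k + q k : 𝕜) = 1 := by exact_mod_cast hpq k
      linear_combination (b k - c : 𝕜) * (hsqrt k).1 + (a k - c : 𝕜) * (hsqrt k).2 + hc' -
        (c : 𝕜) * hpq'
    · simp

theorem LinearMap.IsSymmetric.exists_mem_scalarOn_half [FiniteDimensional 𝕜 E] {T : E →ₗ[𝕜] E}
    (hT : T.IsSymmetric) :
    ∃ K : Submodule 𝕜 E, finrank 𝕜 E / 2 ≤ finrank 𝕜 K ∧ T ∈ scalarOn K := by
  set n := finrank 𝕜 E
  rcases Nat.eq_zero_or_pos n with hn | hn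
  · exact ⟨⊥, by omega, 0, fun x hx _ _ => by simp [(Submodule.mem_bot 𝕜).mp hx]⟩
  let e := hT.eigenvalues rfl
  let w := hT.eigenvectorBasis rfl
  -- pair the `k`-th largest eigenvalue with the `k`-th smallest one, around the median
  let top : Fin (n / 2) → Fin n := fun k => ⟨k, by omega⟩
  let bot : Fin (n / 2) → Fin n := fun k => ⟨n - 1 - k, by omega⟩
  have hinj : Function.Injective (Sum.elim top bot) := by
    rintro (k | k) (l | l) h <;>
      simp only [Sum.elim_inl, Sum.elim_inr, Sum.inl.injEq, Sum.inr.injEq, reduceCtorEq, top, bot,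
        Fin.ext_iff] at h ⊢ <;> omega
  obtain ⟨ψ, hψ, hTψ⟩ := exists_orthonormal_inner_apply_eq_of_pairs (T := T)
    (u := w ∘ top) (v := w ∘ bot) (a := e ∘ top) (b := e ∘ bot) (c := e ⟨n / 2, by omega⟩)
    (by simpa [← Sum.comp_elim] using w.orthonormal.comp _ hinj)
    (fun k => hT.apply_eigenvectorBasis rfl _) (fun k => hT.apply_eigenvectorBasis rfl _)
    (fun k => hT.eigenvalues_antitone rfl (by simp only [Fin.le_def, bot]; omega))
    (fun k => hT.eigenvalues_antitone rfl (by simp [top, Fin.le_def]))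
  refine ⟨Submodule.span 𝕜 (Set.range ψ), ?_, mem_scalarOn_span hTψ⟩
  rw [finrank_span_eq_card hψ.linearIndependent, Fintype.card_fin]

theorem LinearMap.IsSymmetric.exists_le_mem_scalarOn_half {A : E →ₗ[𝕜] E} (hA : A.IsSymmetric)
    (K : Submodule 𝕜 E) [FiniteDimensional 𝕜 K] :
    ∃ K' ≤ K, finrank 𝕜 K / 2 ≤ finrank 𝕜 K' ∧ A ∈ scalarOn K' := by
  let T : K →ₗ[𝕜] K := K.orthogonalProjectionOnto.toLinearMap ∘ₗ A ∘ₗ K.subtype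
  have hT : ∀ x y : K, ⟪x, T y⟫_𝕜 = ⟪(x : E), A y⟫_𝕜 := fun x y =>
    K.inner_orthogonalProjectionOnto_eq_of_mem_left x (A y)
  have hTsymm : T.IsSymmetric := fun x y => by
    rw [← inner_conj_symm, hT, ← hA, inner_conj_symm, hT]
  obtain ⟨L, hL, c, hc⟩ := hTsymm.exists_mem_scalarOn_half
  refine ⟨L.map K.subtype, Submodule.map_subtype_le K L, ?_, c, ?_⟩
  · rwa [Submodule.finrank_map_subtype_eq]
  · rintro _ ⟨x, hx, rfl⟩ _ ⟨y, hy, rfl⟩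
    rw [K.subtype_apply, K.subtype_apply, ← hT, hc x hx y hy, Submodule.coe_inner]

theorem exists_mem_scalarOn_of_isSymmetric [FiniteDimensional 𝕜 E] {ι : Type*}
    {A : ι → E →ₗ[𝕜] E} (hA : ∀ i, (A i).IsSymmetric) (s : Finset ι) :
    ∃ K : Submodule 𝕜 E, finrank 𝕜 E / 2 ^ s.card ≤ finrank 𝕜 K ∧ ∀ i ∈ s, A i ∈ scalarOn K := by
  classical
  induction s using Finset.induction_on with
  | empty => exact ⟨⊤, by simp [finrank_top], by simp⟩
  | insert i s hi ih =>
    obtain ⟨K, hK, hAK⟩ := ih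
    obtain ⟨K', hK'K, hK', hAK'⟩ := (hA i).exists_le_mem_scalarOn_half K
    refine ⟨K', ?_, ?_⟩
    · rw [Finset.card_insert_of_notMem hi, pow_succ, ← Nat.div_div_eq_div_mul]
      exact (Nat.div_le_div_right hK).trans hK'
    · simp only [Finset.mem_insert, forall_eq_or_imp]
      exact ⟨hAK', fun j hj => scalarOn_antitone hK'K (hAK j hj)⟩

theorem exists_orthonormal_of_mem_scalarOn {ι : Type*} {A : ι → E →ₗ[𝕜] E} {K : Submodule 𝕜 E}
    [FiniteDimensional 𝕜 K] (hA : ∀ i, A i ∈ scalarOn K) {m : ℕ} (hm : m ≤ finrank 𝕜 K) :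
    ∃ φ : Fin m → E, Orthonormal 𝕜 φ ∧
      ∃ ω : ι → 𝕜, ∀ i γ δ, ⟪φ γ, A i (φ δ)⟫_𝕜 = ω i * if γ = δ then 1 else 0 := by
  choose ω hω using hA
  let φ : Fin m → E := fun γ => stdOrthonormalBasis 𝕜 K (Fin.castLE hm γ)
  have hφ : Orthonormal 𝕜 φ :=
    ((stdOrthonormalBasis 𝕜 K).orthonormal.comp _ (Fin.castLE_injective hm)).comp_linearIsometry
      K.subtypeₗᵢ
  refine ⟨φ, hφ, ω, fun i γ δ => ?_⟩
  rw [hω i _ (Subtype.prop _) _ (Subtype.prop _), orthonormal_iff_ite.mp hφ]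

end ScalarOn

section Complex
variable {E : Type*} [NormedAddCommGroup E] [InnerProductSpace ℂ E]

theorem exists_mem_scalarOn_of_adjoint_pairs [FiniteDimensional ℂ E] {κ : Type*} [Fintype κ]
    {X : κ → κ → E →ₗ[ℂ] E} (hX : ∀ i j x y, ⟪X i j x, y⟫_ℂ = ⟪x, X j i y⟫_ℂ) :
    ∃ K : Submodule ℂ E, finrank ℂ E / 2 ^ (Fintype.card κ ^ 2) ≤ finrank ℂ K ∧
      ∀ i j, X i j ∈ scalarOn K := by
  classical
  let _ : LinearOrder κ := linearOrderOfSTO WellOrderingRel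
  -- the symmetric operators `X i j + X j i` (`i ≤ j`) and `I • (X i j - X j i)` (`j < i`)
  -- span every `X i j`
  let H : κ × κ → E →ₗ[ℂ] E := fun p =>
    if p.1 ≤ p.2 then X p.1 p.2 + X p.2 p.1 else Complex.I • (X p.1 p.2 - X p.2 p.1)
  have hH : ∀ p, (H p).IsSymmetric := by
    rintro ⟨i, j⟩ x y
    by_cases hij : i ≤ j
    · simp only [H, hij, if_true, LinearMap.add_apply, inner_add_left, inner_add_right, hX]
      ring
    · simp only [H, hij, if_false, LinearMap.smul_apply, LinearMap.sub_apply, inner_smul_left,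
        inner_smul_right, inner_sub_left, inner_sub_right, Complex.conj_I, hX]
      ring
  obtain ⟨K, hK, hHK⟩ := exists_mem_scalarOn_of_isSymmetric hH Finset.univ
  refine ⟨K, by simpa [sq] using hK, ?_⟩
  have hle : ∀ i j, i ≤ j → X i j ∈ scalarOn K ∧ X j i ∈ scalarOn K := by
    intro i j hij
    have h₁ := hHK (i, j) (Finset.mem_univ _)
    have h₂ := hHK (j, i) (Finset.mem_univ _)
    rcases hij.eq_or_lt with rfl | hlt
    · have hii : X i i = (1 / 2 : ℂ) • H (i, i) := by simp only [H, le_refl, if_true]; module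
      exact ⟨hii ▸ Submodule.smul_mem _ _ h₁, hii ▸ Submodule.smul_mem _ _ h₁⟩
    · have hji : ¬ j ≤ i := not_le.mpr hlt
      have hI : ∀ Y : E →ₗ[ℂ] E, Complex.I • Complex.I • Y = -Y := fun Y => by
        rw [smul_smul, Complex.I_mul_I, neg_one_smul]
      have hij' : X i j = (1 / 2 : ℂ) • (H (i, j) + Complex.I • H (j, i)) := by
        simp only [H, hij, hji, if_true, if_false, smul_sub, hI]
        module
      have hji' : X j i = (1 / 2 : ℂ) • (H (i, j) - Complex.I • H (j, i)) := by
        simp only [H, hij, hji, if_true, if_false, smul_sub, hI]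
        module
      rw [hij', hji']
      exact ⟨Submodule.smul_mem _ _ (Submodule.add_mem _ h₁ (Submodule.smul_mem _ _ h₂)),
        Submodule.smul_mem _ _ (Submodule.sub_mem _ h₁ (Submodule.smul_mem _ _ h₂))⟩
  intro i j
  rcases le_total i j with hij | hji
  · exact (hle i j hij).1
  · exact (hle j i hji).2

end Complex

namespace Matrix

variable {R : Type*} [CommRing R] [StarRing R] {A B K M N : Type*}

variable (A) in
def colKroneckerOne [DecidableEq A] (w : N → R) : Matrix (N × A) A R :=
  of fun x a => if x.2 = a then w x.1 else 0

theorem conjTranspose_mul_self_kronecker [Fintype A] [Fintype K] [DecidableEq A]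
    (C : Matrix K N R) (ρ : Matrix A A R) :
    (Cᴴ * C) ⊗ₖ ρ =
      ∑ k, colKroneckerOne A (star (C k)) * ρ * (colKroneckerOne A (star (C k)))ᴴ := by
  ext ⟨n, a⟩ ⟨n', a'⟩
  simp only [kroneckerMap_apply, mul_apply, conjTranspose_apply, colKroneckerOne, of_apply,
    Pi.star_apply, sum_apply, Finset.sum_mul, ite_mul, zero_mul, mul_ite, mul_zero, apply_ite star,
    star_star, star_zero, Finset.sum_ite_eq, Finset.mem_univ, if_true]
  exact Finset.sum_congr rfl fun _ _ => by ring

theorem conjTranspose_mul_kronecker_one_mul [Fintype B] [Fintype M] [DecidableEq M]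
    (V : Matrix (B × M) (N × A) R) (b : Matrix B B R) :
    Vᴴ * ((b ⊗ₖ (1 : Matrix M M R)) * V) =
      ∑ α, (V.submatrix (·, α) id)ᴴ * (b * V.submatrix (·, α) id) := by
  ext x y
  simp only [mul_apply, conjTranspose_apply, kroneckerMap_apply, one_apply, mul_ite, mul_one,
    mul_zero, ite_mul, zero_mul, Fintype.sum_prod_type, Finset.sum_ite_eq, Finset.mem_univ, if_true,
    Finset.mul_sum, conjTranspose_submatrix, sum_apply, submatrix_apply, id_eq]
  exact Finset.sum_comm

def krausOperator [Fintype A] [Fintype N] [DecidableEq A] (V : Matrix (B × M) (N × A) R)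
    (C : Matrix K N R) (α : M) (k : K) : Matrix B A R :=
  V.submatrix (·, α) id * colKroneckerOne A (star (C k))

theorem trace_kronecker_mul_eq_sum_krausOperator [Fintype A] [Fintype B] [Fintype K] [Fintype M]
    [Fintype N] [DecidableEq A] [DecidableEq M]
    (V : Matrix (B × M) (N × A) R) (C : Matrix K N R) (ρ : Matrix A A R) (b : Matrix B B R) :
    ((Cᴴ * C) ⊗ₖ ρ * (Vᴴ * ((b ⊗ₖ (1 : Matrix M M R)) * V))).trace =
      ∑ α, ∑ k, (ρ * ((krausOperator V C α k)ᴴ * (b * krausOperator V C α k))).trace := by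
  rw [conjTranspose_mul_self_kronecker, conjTranspose_mul_kronecker_one_mul, Finset.sum_mul,
    trace_sum, Finset.sum_comm]
  refine Finset.sum_congr rfl fun k _ => ?_
  rw [Finset.mul_sum, trace_sum]
  refine Finset.sum_congr rfl fun α _ => ?_
  simp only [krausOperator, conjTranspose_mul, Matrix.mul_assoc]
  rw [← trace_mul_comm]
  simp only [Matrix.mul_assoc]

open scoped MatrixOrder in
theorem PosSemidef.exists_eq_conjTranspose_mul_self {𝕜 : Type*} [RCLike 𝕜] {n : Type*} [Fintype n]
    [DecidableEq n] {μ : Matrix n n 𝕜} (hμ : μ.PosSemidef) : ∃ C : Matrix n n 𝕜, μ = Cᴴ * C :=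
  CStarAlgebra.nonneg_iff_eq_star_mul_self.mp hμ.nonneg

theorem inner_toEuclideanLin_conjTranspose_mul {𝕜 : Type*} [RCLike 𝕜] {m n : Type*} [Fintype m]
    [Fintype n] [DecidableEq m] [DecidableEq n] (S T : Matrix m n 𝕜) (x y : EuclideanSpace 𝕜 n) :
    ⟪toEuclideanLin (Sᴴ * T) x, y⟫_𝕜 = ⟪x, toEuclideanLin (Tᴴ * S) y⟫_𝕜 := by
  rw [← conjTranspose_conjTranspose (Sᴴ * T), toEuclideanLin_conjTranspose_eq_adjoint,
    LinearMap.adjoint_inner_left, conjTranspose_mul, conjTranspose_conjTranspose]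

end Matrix

theorem pure_memory_channel_code_general
    (dA dB dM : ℕ)
    (V : Matrix (Fin dB × Fin dM) (Fin dM × Fin dA) ℂ)
    (μ : Matrix (Fin dM) (Fin dM) ℂ)
    (hμ : μ.PosSemidef) :
    ∃ s : Fin dM → Fin dM → Matrix (Fin dB) (Fin dA) ℂ,
      (∀ (ρ : Matrix (Fin dA) (Fin dA) ℂ) (b : Matrix (Fin dB) (Fin dB) ℂ),
        ((μ ⊗ₖ ρ) * (Vᴴ * ((b ⊗ₖ (1 : Matrix (Fin dM) (Fin dM) ℂ)) * V))).trace
          = ∑ α : Fin dM, ∑ β : Fin dM,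
              (ρ * ((s α β)ᴴ * (b * s α β))).trace) ∧
      ∃ φ : Fin (dA / 2 ^ dM ^ 4) → EuclideanSpace ℂ (Fin dA),
        Orthonormal ℂ φ ∧
          ∃ ω : (Fin dM × Fin dM) → (Fin dM × Fin dM) → ℂ,
            ∀ (α β α' β' : Fin dM) (γ δ : Fin (dA / 2 ^ dM ^ 4)),
              ⟪φ γ, Matrix.toEuclideanLin ((s α β)ᴴ * s α' β') (φ δ)⟫_ℂ
                = ω (α, β) (α', β') * (if γ = δ then 1 else 0) := by
  obtain ⟨C, rfl⟩ := hμ.exists_eq_conjTranspose_mul_self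
  let s := Matrix.krausOperator V C
  obtain ⟨K, hK, hsK⟩ := exists_mem_scalarOn_of_adjoint_pairs
    (X := fun p q : Fin dM × Fin dM => Matrix.toEuclideanLin ((s p.1 p.2)ᴴ * s q.1 q.2))
    (fun _ _ => Matrix.inner_toEuclideanLin_conjTranspose_mul _ _)
  obtain ⟨φ, hφ, ω, hω⟩ := exists_orthonormal_of_mem_scalarOn (fun p : _ × _ => hsK p.1 p.2)
    (m := dA / 2 ^ dM ^ 4) (by simpa [← pow_mul, ← pow_two] using hK)
  exact ⟨s, Matrix.trace_kronecker_mul_eq_sum_krausOperator V C, φ, hφ, fun p q => ω (p, q),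
    fun α β α' β' => hω ((α, β), (α', β'))⟩

/-- The restriction of a pure quantum memory channel `S(b ⊗ m) = Vᴴ (b ⊗ m) V`
to the `B`-system with fixed initial memory state `μ` admits a Kraus
representation with `d_M²` Kraus operators `s α β`, and these Kraus operators
satisfy the Knill–Laflamme conditions on an orthonormal family of size
`⌊d_A / 2^(d_M⁴)⌋` in `ℂ^{d_A}`: independently of `μ`, the restricted channel
has a perfectly correctable quantum code of dimension at least
`⌊d_A / 2^(d_M⁴)⌋`. -/
theorem pure_memory_channel_code
    (dA dB dM : ℕ) (hA : 0 < dA) (hB : 0 < dB) (hM : 0 < dM)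
    (V : Matrix (Fin dB × Fin dM) (Fin dM × Fin dA) ℂ)
    (hV : Vᴴ * V = 1)
    (μ : Matrix (Fin dM) (Fin dM) ℂ)
    (hμ : μ.PosSemidef) (hμtr : μ.trace = 1) :
    ∃ s : Fin dM → Fin dM → Matrix (Fin dB) (Fin dA) ℂ,
      (∀ (ρ : Matrix (Fin dA) (Fin dA) ℂ) (b : Matrix (Fin dB) (Fin dB) ℂ),
        ((μ ⊗ₖ ρ) * (Vᴴ * ((b ⊗ₖ (1 : Matrix (Fin dM) (Fin dM) ℂ)) * V))).trace
          = ∑ α : Fin dM, ∑ β : Fin dM,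
              (ρ * ((s α β)ᴴ * (b * s α β))).trace) ∧
      ∃ φ : Fin (dA / 2 ^ dM ^ 4) → EuclideanSpace ℂ (Fin dA),
        Orthonormal ℂ φ ∧
          ∃ ω : (Fin dM × Fin dM) → (Fin dM × Fin dM) → ℂ,
            ∀ (α β α' β' : Fin dM) (γ δ : Fin (dA / 2 ^ dM ^ 4)),
              ⟪φ γ, Matrix.toEuclideanLin ((s α β)ᴴ * s α' β') (φ δ)⟫_ℂ
                = ω (α, β) (α', β') * (if γ = δ then 1 else 0) :=
  pure_memory_channel_code_general dA dB dM V μ hμ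
end
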